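/- Define the iterated RK4 map on exact data: Ŷₙ = Y(t) + f(b, h)·∑_{i=0}^{n-1} (α - Y(t + i·h)), where f(b,h) = h·b - (h²/2)·b² + (h³/6)·b³ - (h⁴/24)·b⁴ and Y is the exact solution with true parameter β₁. Then Ŷₙ = Y(t + n·h) for all n ≥ 1 if and only if f(b,h) + exp(-β₁·h) - 1 = 0, provided Y(t) ≠ α. -/

import Mathlib

/-!
With `r = exp (-β₁ h)` the exact solution satisfies `Y (t + i h) - α = (Y t - α) rⁱ`, so the
`n`-step condition reads `(Y t - α) (1 - f ∑_{i<n} rⁱ) = (Y t - α) rⁿ`. Since `Y t ≠ α`, the case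
`n = 1` forces `f = 1 - r`, and conversely `f = 1 - r` makes every case hold because
`(1 - r) ∑_{i<n} rⁱ = 1 - rⁿ`.
-/

open Finset

theorem sub_mul_geom_sum_eq_pow_iff {K : Type*} [Field K] {c f r : K} (hc : c ≠ 0) :
    (∀ n : ℕ, 1 ≤ n → c - f * c * ∑ i ∈ range n, r ^ i = c * r ^ n) ↔ f + r - 1 = 0 := by
  constructor
  · intro H
    have h1 : c * (f + r - 1) = 0 := by
      linear_combination -H 1 le_rfl - c * f * sum_range_one (fun i => r ^ i)
    exact (mul_eq_zero.mp h1).resolve_left hc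
  · intro H n _
    have hf : f = 1 - r := by linear_combination H
    rw [hf, mul_comm (1 - r) c, mul_assoc, mul_neg_geom_sum]
    ring

theorem Real.exp_neg_mul_add_nat_mul (β t h : ℝ) (i : ℕ) :
    Real.exp (-β * (t + i * h)) = Real.exp (-β * t) * Real.exp (-β * h) ^ i := by
  rw [← Real.exp_nat_mul, ← Real.exp_add]
  ring_nf

theorem nstep_matching_iff_general (α β₁ h Y₀ t : ℝ)
    (Y : ℝ → ℝ) (hY : ∀ s, Y s = α + (Y₀ - α) * Real.exp (-β₁ * s))
    (hYt : Y t ≠ α)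
    (f : ℝ)
    (Yhat : ℕ → ℝ)
    (hYhat : ∀ n, Yhat n = Y t + f * ∑ i ∈ Finset.range n, (α - Y (t + i * h))) :
    (∀ n : ℕ, 1 ≤ n → Yhat n = Y (t + n * h)) ↔
      f + Real.exp (-β₁ * h) - 1 = 0 := by
  set r := Real.exp (-β₁ * h)
  have hgrid (i : ℕ) : Y (t + i * h) = α + (Y t - α) * r ^ i := by
    rw [hY, hY, Real.exp_neg_mul_add_nat_mul]
    ring
  have hsum (n : ℕ) :
      ∑ i ∈ range n, (α - Y (t + i * h)) = -((Y t - α) * ∑ i ∈ range n, r ^ i) := by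
    rw [mul_sum, ← sum_neg_distrib]
    exact sum_congr rfl fun i _ => by rw [hgrid]; ring
  rw [← sub_mul_geom_sum_eq_pow_iff (sub_ne_zero.mpr hYt)]
  refine forall₂_congr fun n _ => ?_
  rw [hYhat, hsum, hgrid]
  constructor <;> intro H <;> linear_combination H

theorem nstep_matching_iff (α β₁ h Y₀ t b : ℝ) (hh : h ≠ 0)
    (Y : ℝ → ℝ) (hY : ∀ s, Y s = α + (Y₀ - α) * Real.exp (-β₁ * s))
    (hYt : Y t ≠ α)
    (f : ℝ)
    (hf : f = h * b - (h ^ 2 / 2) * b ^ 2 + (h ^ 3 / 6) * b ^ 3 - (h ^ 4 / 24) * b ^ 4)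
    (Yhat : ℕ → ℝ)
    (hYhat : ∀ n, Yhat n = Y t + f * ∑ i ∈ Finset.range n, (α - Y (t + i * h))) :
    (∀ n : ℕ, 1 ≤ n → Yhat n = Y (t + n * h)) ↔
      f + Real.exp (-β₁ * h) - 1 = 0 :=
  nstep_matching_iff_general α β₁ h Y₀ t Y hY hYt f Yhat hYhat
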